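/- For any three permutations σ_0, σ_1, σ_∞ in S_d with σ_0 σ_1 σ_∞ = id generating a transitive subgroup, the integer g determined by 2 - 2g = c(σ_0) + c(σ_1) + c(σ_∞) - d, where c(σ) is the number of cycles of σ, satisfies g ≥ 0 (equivalently c(σ_0) + c(σ_1) + c(σ_∞) ≤ d + 2). -/

import Mathlib

/-!
Write each of σ₀, σ₁, σ∞ as a product of at most d - c(σᵢ) transpositions: concatenating gives a
word of at most 3d - Σ c(σᵢ) transpositions with product 1, generating a transitive group.
Right multiplication by a transposition (a b) changes the number of cycles by at most one, and if
a and b lie in different orbits of the group generated by the earlier letters, they lie in different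
cycles of the partial product, so the cycle count drops. This happens at least d - 1 times along
the word, and the count starts and ends at d, so the word has length at least 2(d - 1).
-/

/-- The number of cycles of a permutation, including fixed points. -/
def cyclesCount {d : ℕ} (σ : Equiv.Perm (Fin d)) : ℕ :=
  σ.cycleType.card + (Finset.univ.filter fun x : Fin d => σ x = x).card

open Equiv Equiv.Perm MulAction

variable {α : Type*}

namespace Setoid

def classwisePerm (r : Setoid α) : Subgroup (Perm α) where
  carrier := {g | ∀ x, r x (g x)}
  mul_mem' {g h} hg hh x := r.trans (hh x) (hg (h x))
  one_mem' x := r.refl x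
  inv_mem' {g} hg x := by simpa using r.symm (hg (g⁻¹ x))

theorem classwisePerm_mono {r s : Setoid α} (h : r ≤ s) : r.classwisePerm ≤ s.classwisePerm :=
  fun _ hg x => h (hg x)

/-- Merges the classes of `a` and `b` by sending the class of `b` to that of `a`. -/
noncomputable def glue (r : Setoid α) (a b : α) : Setoid α :=
  open scoped Classical in ker fun x => if r x b then Quotient.mk r a else Quotient.mk r x

theorem le_glue (r : Setoid α) (a b : α) : r ≤ r.glue a b := by
  intro x y h
  rw [glue, ker_def]
  by_cases hx : r x b
  · rw [if_pos hx, if_pos (r.trans (r.symm h) hx)]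
  · rw [if_neg hx, if_neg fun hy => hx (r.trans h hy), Quotient.sound h]

theorem glue_rel (r : Setoid α) (a b : α) : r.glue a b a b := by
  rw [glue, ker_def]; simp

theorem glue_eq_of_rel {r : Setoid α} {a b : α} (hab : r a b) : r.glue a b = r := by
  refine le_antisymm (fun x y h => ?_) (r.le_glue a b)
  have hmk (z : α) : (open scoped Classical in
      if r z b then Quotient.mk r a else Quotient.mk r z) = Quotient.mk r z := by
    split_ifs with hz
    · exact Quotient.sound (r.trans hab (r.symm hz))
    · rfl
  rw [glue, ker_def, hmk, hmk] at h
  exact Quotient.exact h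

variable [Finite α]

theorem card_quotient_le_of_le {r s : Setoid α} (h : r ≤ s) :
    Nat.card (Quotient s) ≤ Nat.card (Quotient r) :=
  Nat.card_le_card_of_surjective (map_of_le h) fun q => q.inductionOn fun x => ⟨⟦x⟧, rfl⟩

theorem card_quotient_lt_of_le {r s : Setoid α} (h : r ≤ s) {a b : α} (hr : ¬ r a b)
    (hs : s a b) : Nat.card (Quotient s) < Nat.card (Quotient r) := by
  have := Fintype.ofFinite α
  classical
  simp only [Nat.card_eq_fintype_card]
  refine Fintype.card_lt_of_surjective_not_injective (map_of_le h)
    (fun q => q.inductionOn fun x => ⟨⟦x⟧, rfl⟩) fun hinj => hr ?_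
  exact Quotient.exact (@hinj ⟦a⟧ ⟦b⟧ (Quotient.sound hs))

theorem card_quotient_le_card_quotient_glue_add_one (r : Setoid α) (a b : α) :
    Nat.card (Quotient r) ≤ Nat.card (Quotient (r.glue a b)) + 1 := by
  classical
  let f : α → Quotient r := fun x => if r x b then ⟦a⟧ else ⟦x⟧
  have hcover : Set.univ ⊆ Set.range f ∪ {⟦b⟧} := by
    rintro ⟨x⟩ -
    by_cases hx : r x b
    · exact Or.inr (Quotient.sound hx)
    · exact Or.inl ⟨x, if_neg hx⟩
  calc Nat.card (Quotient r) = (Set.univ : Set (Quotient r)).ncard := (Set.ncard_univ _).symm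
    _ ≤ (Set.range f ∪ {⟦b⟧}).ncard := Set.ncard_le_ncard hcover
    _ ≤ (Set.range f).ncard + 1 := (Set.ncard_union_le _ _).trans_eq (by rw [Set.ncard_singleton])
    _ = Nat.card (Quotient (r.glue a b)) + 1 := by
      rw [← Nat.card_coe_set_eq, Nat.card_congr (quotientKerEquivRange f).symm]
      rfl

end Setoid

namespace Equiv.Perm

noncomputable def numCycles (σ : Perm α) : ℕ := Nat.card (Quotient (SameCycle.setoid σ))

noncomputable def numOrbits (S : Set (Perm α)) : ℕ :=
  Nat.card (orbitRel.Quotient (Subgroup.closure S) α)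

theorem sameCycle_setoid_le {σ : Perm α} {r : Setoid α} (hσ : σ ∈ r.classwisePerm) :
    SameCycle.setoid σ ≤ r := by
  rintro _ _ ⟨k, rfl⟩
  exact zpow_mem hσ k _

theorem orbitRel_le {H : Subgroup (Perm α)} {r : Setoid α} (hH : H ≤ r.classwisePerm) :
    orbitRel H α ≤ r := by
  rintro _ y ⟨g, rfl⟩
  exact r.symm (hH g.2 y)

theorem le_classwisePerm_orbitRel (H : Subgroup (Perm α)) :
    H ≤ (orbitRel H α).classwisePerm :=
  fun g hg _ => (orbitRel H α).symm ⟨⟨g, hg⟩, rfl⟩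

theorem numCycles_one : numCycles (1 : Perm α) = Nat.card α := by
  have : SameCycle.setoid (1 : Perm α) = ⊥ := by
    ext x y
    exact sameCycle_one
  rw [numCycles, this, Nat.card_congr Setoid.quotientBotEquiv]

theorem numOrbits_empty : numOrbits (∅ : Set (Perm α)) = Nat.card α := by
  have : orbitRel (Subgroup.closure (∅ : Set (Perm α))) α = ⊥ :=
    le_bot_iff.1 (orbitRel_le (by simp))
  rw [numOrbits, orbitRel.Quotient, this, Nat.card_congr Setoid.quotientBotEquiv]

theorem numCycles_le_card [Finite α] (σ : Perm α) : numCycles σ ≤ Nat.card α :=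
  Nat.card_le_card_of_surjective _ Quotient.mk_surjective

theorem numOrbits_le_of_subset_closure [Finite α] {S T : Set (Perm α)}
    (h : S ⊆ Subgroup.closure T) : numOrbits T ≤ numOrbits S :=
  Setoid.card_quotient_le_of_le (orbitRel_le (((Subgroup.closure_le _).2 h).trans
    (le_classwisePerm_orbitRel _)))

variable [DecidableEq α]

theorem numCycles_eq_card_cycleType_add_card_fixedPoints [Fintype α] (σ : Perm α) :
    numCycles σ = σ.cycleType.card + (Finset.univ.filter fun x => σ x = x).card := by
  let f : α → σ.cycleFactorsFinset ⊕ {x // σ x = x} := fun x =>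
    if hx : σ x = x then .inr ⟨x, hx⟩
    else .inl ⟨σ.cycleOf x, cycleOf_mem_cycleFactorsFinset_iff.2 (mem_support.2 hx)⟩
  have hker : SameCycle.setoid σ = Setoid.ker f := by
    ext x y
    rw [Setoid.ker_def]
    change SameCycle σ x y ↔ _
    by_cases hx : σ x = x <;> by_cases hy : σ y = y
    · simpa [f, hx, hy] using ⟨fun h => h.eq_of_left hx, fun h => h ▸ SameCycle.refl σ x⟩
    · simpa [f, hx, hy] using fun h => hy (h.apply_eq_self_iff.1 hx)
    · simpa [f, hx, hy] using fun h => hx (h.apply_eq_self_iff.2 hy)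
    · simpa [f, hx, hy] using
        sameCycle_iff_cycleOf_eq_of_mem_support (mem_support.2 hx) (mem_support.2 hy)
  have hf : Function.Surjective f := by
    rintro (⟨c, hc⟩ | ⟨x, hx⟩)
    · obtain ⟨x, hx⟩ := (mem_cycleFactorsFinset_iff.1 hc).1.nonempty_support
      have hσx : σ x ≠ x := mem_support.1 (mem_cycleFactorsFinset_support_le hc hx)
      exact ⟨x, by simp [f, hσx, (cycle_is_cycleOf hx hc).symm]⟩
    · exact ⟨x, by simp [f, hx]⟩
  rw [numCycles, hker, Nat.card_congr (Setoid.quotientKerEquivOfSurjective f hf), Nat.card_sum,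
    Nat.card_eq_fintype_card, Nat.card_eq_fintype_card, Fintype.card_coe, Fintype.card_subtype,
    cycleType_def, Multiset.card_map, Finset.card_val]

theorem swap_mem_classwisePerm_glue (r : Setoid α) (a b : α) :
    swap a b ∈ (r.glue a b).classwisePerm := by
  intro x
  rw [swap_apply_def]
  split_ifs with hxa hxb
  · exact hxa ▸ r.glue_rel a b
  · exact hxb ▸ (r.glue a b).symm (r.glue_rel a b)
  · exact (r.glue a b).refl x

theorem sameCycle_setoid_le_glue (σ : Perm α) (a b : α) :
    SameCycle.setoid σ ≤ (SameCycle.setoid (σ * swap a b)).glue a b := by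
  have hτ : σ * swap a b ∈ (SameCycle.setoid (σ * swap a b)).classwisePerm :=
    fun x => sameCycle_apply_right.2 (SameCycle.refl _ x)
  have h := mul_mem (Setoid.classwisePerm_mono (Setoid.le_glue _ a b) hτ)
    (swap_mem_classwisePerm_glue _ a b)
  rw [mul_swap_mul_self] at h
  exact sameCycle_setoid_le h

theorem orbitRel_closure_insert_swap_le (S : Set (Perm α)) (a b : α) :
    orbitRel (Subgroup.closure (insert (swap a b) S)) α ≤
      (orbitRel (Subgroup.closure S) α).glue a b := by
  refine orbitRel_le ((Subgroup.closure_le _).2 (Set.insert_subset ?_ ?_))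
  · exact swap_mem_classwisePerm_glue _ a b
  · exact fun g hg => Setoid.classwisePerm_mono (Setoid.le_glue _ a b)
      (le_classwisePerm_orbitRel _ (Subgroup.subset_closure hg))

variable [Finite α]

theorem numCycles_mul_swap_le (σ : Perm α) (a b : α) :
    numCycles (σ * swap a b) ≤ numCycles σ + 1 :=
  (Setoid.card_quotient_le_card_quotient_glue_add_one _ a b).trans
    (Nat.add_le_add_right (Setoid.card_quotient_le_of_le (sameCycle_setoid_le_glue σ a b)) 1)

theorem sameCycle_mul_swap_of_not_sameCycle {σ : Perm α} {a b : α} (hab : ¬ SameCycle σ a b) :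
    SameCycle (σ * swap a b) a b := by
  set τ := σ * swap a b
  have hτb : τ b = σ a := by simp [τ]
  -- τ agrees with σ on the σ-cycle of a except at a, and τ b = σ a: from b, τ runs through that
  -- cycle until it reaches a.
  let s : Set α := {x | SameCycle σ a x → SameCycle τ b x}
  have hs : Set.MapsTo σ s s := by
    intro x hx hσx
    have hax : SameCycle σ a x := sameCycle_apply_right.1 hσx
    rcases eq_or_ne x a with rfl | hxa
    · exact hτb ▸ sameCycle_apply_right.2 (SameCycle.refl τ b)
    · have hxb : x ≠ b := by rintro rfl; exact hab hax
      have hτx : τ x = σ x := by simp [τ, swap_apply_of_ne_of_ne hxa hxb]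
      exact hτx ▸ sameCycle_apply_right.2 (hx hax)
  have hσa : σ a ∈ s := fun _ => hτb ▸ sameCycle_apply_right.2 (SameCycle.refl τ b)
  obtain ⟨k, -, hk⟩ := (sameCycle_apply_left.2 (SameCycle.refl σ a)).exists_pow_eq'
  have ha : a ∈ s := hk ▸ hs.perm_pow k hσa
  exact (ha (SameCycle.refl σ a)).symm

theorem numCycles_mul_swap_lt {σ : Perm α} {a b : α} (hab : ¬ SameCycle σ a b) :
    numCycles (σ * swap a b) < numCycles σ := by
  have hle := sameCycle_setoid_le_glue σ a b
  rw [Setoid.glue_eq_of_rel (sameCycle_mul_swap_of_not_sameCycle hab)] at hle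
  exact Setoid.card_quotient_lt_of_le hle hab (sameCycle_mul_swap_of_not_sameCycle hab)

theorem numOrbits_le_numOrbits_insert_swap_add_one (S : Set (Perm α)) (a b : α) :
    numOrbits S ≤ numOrbits (insert (swap a b) S) + 1 :=
  (Setoid.card_quotient_le_card_quotient_glue_add_one _ a b).trans
    (Nat.add_le_add_right (Setoid.card_quotient_le_of_le (orbitRel_closure_insert_swap_le S a b)) 1)

theorem numOrbits_le_numOrbits_insert_swap {S : Set (Perm α)} {a b : α}
    (hab : orbitRel (Subgroup.closure S) α a b) :
    numOrbits S ≤ numOrbits (insert (swap a b) S) := by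
  have hle := orbitRel_closure_insert_swap_le S a b
  rw [Setoid.glue_eq_of_rel hab] at hle
  exact Setoid.card_quotient_le_of_le hle

theorem exists_list_isSwap_prod_eq (σ : Perm α) :
    ∃ l : List (Perm α), (∀ τ ∈ l, τ.IsSwap) ∧ l.prod = σ ∧
      l.length + numCycles σ ≤ Nat.card α := by
  by_cases hσ : σ = 1
  · exact ⟨[], by simp, by simp [hσ], by simp [hσ, numCycles_one]⟩
  obtain ⟨x, hx⟩ : ∃ x, σ x ≠ x := not_forall.1 fun h => hσ (Perm.ext h)
  obtain ⟨y, hσy⟩ : ∃ y, σ y = x := ⟨σ⁻¹ x, by simp⟩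
  have hyx : y ≠ x := by
    rintro rfl
    exact hx hσy
  have hlt : numCycles σ < numCycles (σ * swap y x) := by
    have hfix : (σ * swap y x) x = x := by simp [hσy]
    have hnot : ¬ SameCycle (σ * swap y x) y x := fun h => hyx (h.symm.eq_of_left hfix).symm
    simpa only [mul_swap_mul_self] using numCycles_mul_swap_lt hnot
  obtain ⟨l, hl, hprod, hlen⟩ := exists_list_isSwap_prod_eq (σ * swap y x)
  refine ⟨l ++ [swap y x], fun τ hτ => ?_, by simp [hprod], by simp; omega⟩
  rcases List.mem_append.1 hτ with hτ | hτ
  · exact hl τ hτ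
  · exact List.mem_singleton.1 hτ ▸ ⟨y, x, hyx, rfl⟩
termination_by Nat.card α - numCycles σ
decreasing_by have := numCycles_le_card (σ * swap y x); omega

theorem numCycles_prod_add_card_le (l : List (Perm α)) (hl : ∀ τ ∈ l, τ.IsSwap) :
    numCycles l.prod + Nat.card α ≤ l.length + 2 * numOrbits {τ | τ ∈ l} := by
  induction l using List.reverseRecOn with
  | nil => simp [numCycles_one, numOrbits_empty, two_mul]
  | append_singleton l τ ih =>
    obtain ⟨a, b, -, rfl⟩ := hl τ (by simp)
    have ih := ih fun τ hτ => hl τ (by simp [hτ])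
    have hS : {τ | τ ∈ l ++ [swap a b]} = insert (swap a b) {τ | τ ∈ l} := by
      ext; simp [or_comm]
    rw [List.prod_append, List.prod_singleton, List.length_append, List.length_singleton, hS]
    have hprod : l.prod ∈ Subgroup.closure {τ | τ ∈ l} :=
      Subgroup.list_prod_mem _ fun τ hτ => Subgroup.subset_closure hτ
    -- `l.prod` lies in the group, so joining two of its orbits also joins two cycles of `l.prod`.
    by_cases hab : orbitRel (Subgroup.closure {τ | τ ∈ l}) α a b
    · have := numOrbits_le_numOrbits_insert_swap hab
      have := numCycles_mul_swap_le l.prod a b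
      omega
    · have hnot : ¬ SameCycle l.prod a b := fun h =>
        hab (sameCycle_setoid_le (le_classwisePerm_orbitRel _ hprod) h)
      have := numCycles_mul_swap_lt hnot
      have := numOrbits_le_numOrbits_insert_swap_add_one {τ | τ ∈ l} a b
      omega

theorem numCycles_add_numCycles_add_numCycles_le {σ₀ σ₁ σ₂ : Perm α} (h : σ₀ * σ₁ * σ₂ = 1) :
    numCycles σ₀ + numCycles σ₁ + numCycles σ₂ ≤ Nat.card α + 2 * numOrbits {σ₀, σ₁, σ₂} := by
  obtain ⟨l₀, hl₀, rfl, hlen₀⟩ := exists_list_isSwap_prod_eq σ₀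
  obtain ⟨l₁, hl₁, rfl, hlen₁⟩ := exists_list_isSwap_prod_eq σ₁
  obtain ⟨l₂, hl₂, rfl, hlen₂⟩ := exists_list_isSwap_prod_eq σ₂
  have hl : ∀ τ ∈ l₀ ++ l₁ ++ l₂, τ.IsSwap := by
    simpa [or_imp, forall_and] using ⟨hl₀, hl₁, hl₂⟩
  have horb : numOrbits {τ | τ ∈ l₀ ++ l₁ ++ l₂} ≤ numOrbits {l₀.prod, l₁.prod, l₂.prod} := by
    refine numOrbits_le_of_subset_closure ?_
    rintro _ (rfl | rfl | rfl) <;>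
      exact Subgroup.list_prod_mem _ fun τ hτ => Subgroup.subset_closure (by simp [hτ])
  have key := numCycles_prod_add_card_le _ hl
  rw [List.prod_append, List.prod_append, h, numCycles_one] at key
  simp only [List.length_append] at key
  omega

end Equiv.Perm

theorem hypermap_genus_nonneg_general
    (d : ℕ) (σ₀ σ₁ σinf : Equiv.Perm (Fin d))
    (hprod : σ₀ * σ₁ * σinf = 1)
    (htrans : ∀ i j : Fin d, ∃ π ∈ Subgroup.closure ({σ₀, σ₁, σinf} :
      Set (Equiv.Perm (Fin d))), π i = j) :
    (∀ g : ℤ, 2 - 2 * g =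
        (cyclesCount σ₀ : ℤ) + cyclesCount σ₁ + cyclesCount σinf - d → 0 ≤ g) ∧
      cyclesCount σ₀ + cyclesCount σ₁ + cyclesCount σinf ≤ d + 2 := by
  have hcycles (σ : Perm (Fin d)) : cyclesCount σ = numCycles σ :=
    (numCycles_eq_card_cycleType_add_card_fixedPoints σ).symm
  have hconn : numOrbits ({σ₀, σ₁, σinf} : Set (Perm (Fin d))) ≤ 1 := by
    refine Finite.card_le_one_iff_subsingleton.2 ⟨fun p q => ?_⟩
    induction p, q using Quotient.inductionOn₂ with | _ i j => ?_
    obtain ⟨π, hπ, hπji⟩ := htrans j i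
    exact Quotient.sound ⟨⟨π, hπ⟩, hπji⟩
  have hbound := numCycles_add_numCycles_add_numCycles_le hprod
  rw [Nat.card_fin, ← hcycles, ← hcycles, ← hcycles] at hbound
  have hsum : cyclesCount σ₀ + cyclesCount σ₁ + cyclesCount σinf ≤ d + 2 := by omega
  exact ⟨fun g hg => by omega, hsum⟩

/-- a connected hypermap has nonnegative genus: if `σ₀σ₁σ∞ = 1` and
`⟨σ₀,σ₁,σ∞⟩` is transitive, then the `g` with `2 - 2g = c(σ₀)+c(σ₁)+c(σ∞) - d`
satisfies `g ≥ 0`, i.e. `c(σ₀)+c(σ₁)+c(σ∞) ≤ d + 2`. -/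
theorem hypermap_genus_nonneg
    (d : ℕ) (hd : 1 ≤ d) (σ₀ σ₁ σinf : Equiv.Perm (Fin d))
    (hprod : σ₀ * σ₁ * σinf = 1)
    (htrans : ∀ i j : Fin d, ∃ π ∈ Subgroup.closure ({σ₀, σ₁, σinf} :
      Set (Equiv.Perm (Fin d))), π i = j) :
    (∀ g : ℤ, 2 - 2 * g =
        (cyclesCount σ₀ : ℤ) + cyclesCount σ₁ + cyclesCount σinf - d → 0 ≤ g) ∧
      cyclesCount σ₀ + cyclesCount σ₁ + cyclesCount σinf ≤ d + 2 :=
  hypermap_genus_nonneg_general d σ₀ σ₁ σinf hprod htrans
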